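/- arXiv:1202.5154 — 2 statements merged into one kernel-verified Lean document; each statement's English description precedes it below -/
import Mathlib

section
/- Every nonempty C∞-word w admits exactly two primitives of minimal length, and these two primitives are complements of each other; likewise, w admits exactly two primitives of maximal length, and these two primitives are complements of each other. -/
namespace CInfWords

open scoped Classical

/-- Run-length encoding Δ of a word. -/
def rle : List ℕ → List ℕ
  | [] => []
  | [_] => [1]
  | a :: b :: l =>
    if a = b then
      match rle (b :: l) with
      | [] => [1]
      | c :: r => (c + 1) :: r
    else 1 :: rle (b :: l)

/-- Erase a leading `1`, if any. -/
def trim1 : List ℕ → List ℕ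
  | 1 :: l => l
  | l => l

/-- The derivative `D`: the run-length encoding with the first and/or the last
symbol erased when they are equal to `1`. -/
def D (w : List ℕ) : List ℕ := trim1 ((trim1 (rle w).reverse).reverse)

/-- Words over Σ = {1,2}. -/
def IsWord (w : List ℕ) : Prop := ∀ x ∈ w, x = 1 ∨ x = 2

/-- Words over Σ₀ = {0,1,2}. -/
def IsWord0 (w : List ℕ) : Prop := ∀ x ∈ w, x = 0 ∨ x = 1 ∨ x = 2

/-- Σ₀^{++}: words over Σ₀ that are empty or begin with a nonzero symbol. -/
def Spp (w : List ℕ) : Prop := IsWord0 w ∧ (w = [] ∨ w.headI ≠ 0)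

/-- C^∞-words: every iterated derivative is a word over Σ = {1,2}. -/
def Cinf (w : List ℕ) : Prop := ∀ k, IsWord (D^[k] w)

/-- The height of a C^∞-word: the least k with D^[k] w = ε. -/
noncomputable def height (w : List ℕ) : ℕ := sInf {k | D^[k] w = []}

/-- The root of a C^∞-word of height k > 0: its (k-1)-st derivative. -/
noncomputable def root (w : List ℕ) : List ℕ := D^[height w - 1] w

/-- `v` is a primitive of `w`. -/
def Primitive (v w : List ℕ) : Prop := IsWord v ∧ D v = w

/-- The complement: swap 1's and 2's. -/
def compl (w : List ℕ) : List ℕ := w.map (fun x => 3 - x)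

/-- Minimal C^∞-words: every derivative is a shortest primitive of the next one. -/
def Minimal (w : List ℕ) : Prop :=
  Cinf w ∧ 0 < height w ∧
    ∀ j, j + 2 ≤ height w → ∀ v, Primitive v (D^[j+1] w) → (D^[j] w).length ≤ v.length

/-- Maximal C^∞-words: every derivative is a longest primitive of the next one. -/
def Maximal (w : List ℕ) : Prop :=
  Cinf w ∧ 0 < height w ∧
    ∀ j, j + 2 ≤ height w → ∀ v, Primitive v (D^[j+1] w) → v.length ≤ (D^[j] w).length

def LeftMinimal (w : List ℕ) : Prop := ∃ v, Minimal v ∧ w <+: v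
def RightMinimal (w : List ℕ) : Prop := ∃ v, Minimal v ∧ w <:+ v
def LeftMaximal (w : List ℕ) : Prop := ∃ v, Maximal v ∧ w <+: v
def RightMaximal (w : List ℕ) : Prop := ∃ v, Maximal v ∧ w <:+ v

/-- Single-rooted minimal words. -/
def SRMin (w : List ℕ) : Prop := Minimal w ∧ (root w).length = 1

/-- Double-rooted minimal words. -/
def DRMin (w : List ℕ) : Prop := Minimal w ∧ (root w).length = 2

/-- The left frontier Ψ(w). -/
noncomputable def psi (w : List ℕ) : List ℕ :=
  (List.range (height w)).map fun i =>
    if i = 0 then w.getD 0 0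
    else if (D^[i] w).getD 0 0 = 2 ∧ (D^[i-1] w).getD 0 0 ≠ (D^[i-1] w).getD 1 0
      then 0
    else (D^[i] w).getD 0 0

/-- The single-rooted minimal word with left frontier U (if it exists). -/
noncomputable def srmOf (U : List ℕ) : List ℕ :=
  if h : ∃ w, SRMin w ∧ psi w = U then h.choose else []

/-- The double-rooted minimal word with left frontier U (if it exists). -/
noncomputable def drmOf (U : List ℕ) : List ℕ :=
  if h : ∃ w, DRMin w ∧ psi w = U then h.choose else []

/-- Γs: the right frontier of the single-rooted minimal word with left frontier U. -/
noncomputable def Gs (U : List ℕ) : List ℕ := psi (srmOf U).reverse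

/-- Γd: the right frontier of the double-rooted minimal word with left frontier U. -/
noncomputable def Gd (U : List ℕ) : List ℕ := psi (drmOf U).reverse

/-- Θ = Γs ∘ Γd. -/
noncomputable def Th (U : List ℕ) : List ℕ := Gs (Gd U)

/-- Π = Γd ∘ Γs. -/
noncomputable def Pp (U : List ℕ) : List ℕ := Gd (Gs U)

/-- One step in the graph G: from node U, the edge labeled 1 goes to U·1, the edge
labeled 2 goes to U·2, and the edge labeled 0 goes to Θ(U)·2. -/
noncomputable def step (U : List ℕ) (a : ℕ) : List ℕ :=
  if a = 1 then U ++ [1] else if a = 2 then U ++ [2] else Th U ++ [2]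

/-- The endpoint of the path in G starting at the origin ε and labeled by W. -/
noncomputable def pathEnd (W : List ℕ) : List ℕ := W.foldl step []

/-- W ∈ Σ₀^{++} labels a directed path in G from ε to U. -/
def LabelsPath (W U : List ℕ) : Prop := Spp W ∧ pathEnd W = U

/-- ‖U‖: the number of words in Σ₀^{++} labeling a path in G from ε to U. -/
noncomputable def normG (U : List ℕ) : ℕ := {W | LabelsPath W U}.ncard

/-- |U|: the length of the single-rooted minimal word with left frontier U. -/
noncomputable def len (U : List ℕ) : ℕ := (srmOf U).length

/-- u is the minimal part of w: the first (leftmost-occurring) factor of w that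
is a single-rooted minimal word of the same height as w. -/
def IsMinPart (u w : List ℕ) : Prop :=
  ∃ s t, w = s ++ u ++ t ∧ SRMin u ∧ height u = height w ∧
    ∀ u' s' t', w = s' ++ u' ++ t' → SRMin u' → height u' = height w →
      s.length ≤ s'.length

/-! A primitive `v` of `w` is determined by its first letter and by `Δ(v)`, and `D` only erases
a leading and a trailing `1` of `Δ(v)`. Hence `Δ(v) = 1^e w 1^f` with `e, f ≤ 1`, where `e = 0`
is possible only if `w` does not begin with `1` and `f = 0` only if `w` does not end with `1`.
Since `|v| = e + Σw + f`, each of the two extremal lengths fixes `(e, f)`, and the two possible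
first letters give a primitive and its complement. -/

def ofRuns : ℕ → List ℕ → List ℕ
  | _, [] => []
  | b, n :: c => List.replicate n b ++ ofRuns (3 - b) c

section Runs

open List

lemma ofRuns_cons (b n : ℕ) (c : List ℕ) :
    ofRuns b (n :: c) = replicate n b ++ ofRuns (3 - b) c := rfl

lemma length_ofRuns (b : ℕ) (c : List ℕ) : (ofRuns b c).length = c.sum := by
  induction c generalizing b with
  | nil => rfl
  | cons n c ih => simp [ofRuns_cons, ih]

lemma isWord_ofRuns {b : ℕ} (hb : b = 1 ∨ b = 2) (c : List ℕ) : IsWord (ofRuns b c) := by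
  induction c generalizing b with
  | nil => simp [ofRuns, IsWord]
  | cons n c ih =>
    intro x hx
    rcases mem_append.1 hx with hx | hx
    · exact eq_of_mem_replicate hx ▸ hb
    · exact ih (by omega) x hx

lemma compl_ofRuns {b : ℕ} (hb : b ≤ 3) (c : List ℕ) : compl (ofRuns b c) = ofRuns (3 - b) c := by
  induction c generalizing b with
  | nil => rfl
  | cons n c ih =>
    rw [ofRuns_cons, ofRuns_cons, compl, map_append, map_replicate, ← compl, ih (by omega),
      Nat.sub_sub_self hb]

lemma compl_ne_self {v : List ℕ} (hv : v ≠ []) : compl v ≠ v := by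
  obtain ⟨a, t, rfl⟩ := exists_cons_of_ne_nil hv
  simp only [compl, map_cons, ne_eq, cons.injEq, not_and]
  omega

lemma head?_ofRuns_cons (b : ℕ) {n : ℕ} (hn : 0 < n) (c : List ℕ) :
    (ofRuns b (n :: c)).head? = some b := by
  obtain ⟨m, rfl⟩ := Nat.exists_eq_add_of_lt hn
  simp [ofRuns_cons, replicate_succ]

lemma rle_ne_nil (a : ℕ) (l : List ℕ) : rle (a :: l) ≠ [] := by
  cases l with
  | nil => simp [rle]
  | cons b t =>
    rw [rle]
    split_ifs
    · split <;> simp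
    · simp

lemma rle_cons_cons_of_ne {a b : ℕ} (h : a ≠ b) (l : List ℕ) :
    rle (a :: b :: l) = 1 :: rle (b :: l) := by
  rw [rle, if_neg h]

lemma rle_cons_cons_self {a n : ℕ} {l r : List ℕ} (h : rle (a :: l) = n :: r) :
    rle (a :: a :: l) = (n + 1) :: r := by
  rw [rle, if_pos rfl, h]

lemma rle_replicate_append (b n : ℕ) {l : List ℕ} (hl : l.head? ≠ some b) :
    rle (replicate (n + 1) b ++ l) = (n + 1) :: rle l := by
  induction n with
  | zero =>
    cases l with
    | nil => rfl
    | cons a t => exact rle_cons_cons_of_ne (fun h => hl (by simp [h])) t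
  | succ n ih =>
    rw [replicate_succ, cons_append] at ih ⊢
    exact rle_cons_cons_self ih

lemma rle_ofRuns (b : ℕ) {c : List ℕ} (hc : ∀ x ∈ c, 0 < x) : rle (ofRuns b c) = c := by
  induction c generalizing b with
  | nil => rfl
  | cons n c ih =>
    obtain ⟨m, rfl⟩ := Nat.exists_eq_add_of_lt (hc n mem_cons_self)
    -- consecutive blocks carry the letters `x` and `3 - x`, which differ for every `x : ℕ`
    have hhead : (ofRuns (3 - b) c).head? ≠ some b := by
      cases c with
      | nil => simp [ofRuns]
      | cons k c =>
        rw [head?_ofRuns_cons _ (hc k (by simp))]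
        simp only [ne_eq, Option.some.injEq]
        omega
    rw [ofRuns_cons, zero_add, rle_replicate_append b m hhead,
      ih (3 - b) fun x hx => hc x (mem_cons_of_mem _ hx)]

lemma ofRuns_headI_rle {v : List ℕ} (hv : IsWord v) : ofRuns v.headI (rle v) = v := by
  induction v with
  | nil => rfl
  | cons a t ih =>
    have ht : IsWord t := fun x hx => hv x (mem_cons_of_mem _ hx)
    cases t with
    | nil => rfl
    | cons b t =>
      have ih := ih ht
      simp only [headI] at ih ⊢
      by_cases hab : a = b
      · subst hab
        obtain ⟨n, r, hnr⟩ := exists_cons_of_ne_nil (rle_ne_nil a t)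
        rw [hnr] at ih
        rw [rle_cons_cons_self hnr, ofRuns_cons, replicate_succ, cons_append, ← ofRuns_cons, ih]
      · have hb : 3 - a = b := by
          have := hv a mem_cons_self
          have := ht b mem_cons_self
          omega
        rw [rle_cons_cons_of_ne hab, ofRuns_cons, hb, ih]
        rfl

end Runs

/-- `replicate e 1 ++ l` is a `trim1`-preimage of a word `l` with first letter `a`. -/
def IsTrimPad (a e : ℕ) : Prop := e ≤ 1 ∧ (a = 1 → e = 1)

lemma trim1_eq_iff {l w : List ℕ} :
    trim1 l = w ↔ ∃ e, IsTrimPad w.headI e ∧ l = List.replicate e 1 ++ w := by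
  constructor
  · rintro rfl
    match l with
    | [] => exact ⟨0, by simp [IsTrimPad, trim1], rfl⟩
    | 1 :: t => exact ⟨1, by simp [IsTrimPad], rfl⟩
    | 0 :: t => exact ⟨0, by simp [IsTrimPad, trim1], rfl⟩
    | (n + 2) :: t => exact ⟨0, by simp [IsTrimPad, trim1], rfl⟩
  · rintro ⟨e, ⟨he, hw⟩, rfl⟩
    obtain rfl | rfl : e = 0 ∨ e = 1 := by omega
    · match w, hw with
      | [], _ => rfl
      | 0 :: _, _ => rfl
      | 1 :: _, h => exact absurd (h rfl) (by decide)
      | (_ + 2) :: _, _ => rfl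
    · rfl

lemma D_eq_iff {v w : List ℕ} (hw : w ≠ []) :
    D v = w ↔ ∃ e f, IsTrimPad w.headI e ∧ IsTrimPad w.reverse.headI f ∧
      rle v = List.replicate e 1 ++ w ++ List.replicate f 1 := by
  have hhead (e : ℕ) : (w.reverse ++ List.replicate e 1).headI = w.reverse.headI := by
    obtain ⟨a, t, h⟩ := List.exists_cons_of_ne_nil (List.reverse_ne_nil_iff.2 hw)
    rw [h]
    rfl
  simp only [D, trim1_eq_iff, List.reverse_eq_iff, List.reverse_append, List.reverse_replicate,
    hhead]
  constructor
  · rintro ⟨e, he, f, hf, h⟩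
    exact ⟨e, f, he, hf, by simpa using congrArg List.reverse h⟩
  · rintro ⟨e, f, he, hf, h⟩
    exact ⟨e, he, f, hf, by simp [h]⟩

lemma Primitive.ne_nil {v w : List ℕ} (h : Primitive v w) (hw : w ≠ []) : v ≠ [] := by
  rintro rfl
  exact hw h.2.symm

lemma primitive_iff {v w : List ℕ} (hw : IsWord w) (hne : w ≠ []) :
    Primitive v w ↔ ∃ b e f, (b = 1 ∨ b = 2) ∧ IsTrimPad w.headI e ∧
      IsTrimPad w.reverse.headI f ∧ v = ofRuns b (List.replicate e 1 ++ w ++ List.replicate f 1) := by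
  constructor
  · intro h
    obtain ⟨e, f, he, hf, hrle⟩ := (D_eq_iff hne).1 h.2
    obtain ⟨a, t, rfl⟩ := List.exists_cons_of_ne_nil (h.ne_nil hne)
    refine ⟨a, e, f, h.1 a List.mem_cons_self, he, hf, ?_⟩
    rw [← hrle]
    exact (ofRuns_headI_rle h.1).symm
  · rintro ⟨b, e, f, hb, he, hf, rfl⟩
    have hpos : ∀ x ∈ List.replicate e 1 ++ w ++ List.replicate f 1, 0 < x := by
      intro x hx
      simp only [List.mem_append, List.mem_replicate] at hx
      rcases hx with (⟨-, rfl⟩ | hx) | ⟨-, rfl⟩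
      · exact Nat.one_pos
      · rcases hw x hx with rfl | rfl <;> decide
      · exact Nat.one_pos
    exact ⟨isWord_ofRuns hb _, (D_eq_iff hne).2 ⟨e, f, he, hf, rle_ofRuns b hpos⟩⟩

lemma length_ofRuns_pad (b e f : ℕ) (w : List ℕ) :
    (ofRuns b (List.replicate e 1 ++ w ++ List.replicate f 1)).length = e + w.sum + f := by
  simp only [length_ofRuns, List.sum_append, List.sum_replicate, smul_eq_mul, mul_one]

theorem exists_extremal_primitives {w : List ℕ} (hw : IsWord w) (hne : w ≠ [])
    (r : ℕ → ℕ → Prop) {e₀ f₀ : ℕ} (he₀ : IsTrimPad w.headI e₀)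
    (hf₀ : IsTrimPad w.reverse.headI f₀)
    (hbest : ∀ e f, IsTrimPad w.headI e → IsTrimPad w.reverse.headI f →
      r (e₀ + w.sum + f₀) (e + w.sum + f))
    (huniq : ∀ e f, IsTrimPad w.headI e → IsTrimPad w.reverse.headI f →
      r (e + w.sum + f) (e₀ + w.sum + f₀) → e = e₀ ∧ f = f₀) :
    ∃ v₁ v₂, v₁ ≠ v₂ ∧ v₂ = compl v₁ ∧
      {v | Primitive v w ∧ ∀ v', Primitive v' w → r v.length v'.length} = {v₁, v₂} := by
  set c₀ := List.replicate e₀ 1 ++ w ++ List.replicate f₀ 1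
  have hprim {b : ℕ} (hb : b = 1 ∨ b = 2) : Primitive (ofRuns b c₀) w :=
    (primitive_iff hw hne).2 ⟨b, e₀, f₀, hb, he₀, hf₀, rfl⟩
  have hcompl : ofRuns 2 c₀ = compl (ofRuns 1 c₀) := (compl_ofRuns (b := 1) (by decide) c₀).symm
  refine ⟨ofRuns 1 c₀, ofRuns 2 c₀,
    hcompl ▸ (compl_ne_self ((hprim (Or.inl rfl)).ne_nil hne)).symm, hcompl, ?_⟩
  ext v
  simp only [Set.mem_ofPred_eq, Set.mem_insert_iff, Set.mem_singleton_iff]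
  constructor
  · rintro ⟨hv, hopt⟩
    obtain ⟨b, e, f, hb, he, hf, rfl⟩ := (primitive_iff hw hne).1 hv
    have hr := hopt _ (hprim (Or.inl rfl))
    rw [length_ofRuns_pad, length_ofRuns_pad] at hr
    obtain ⟨rfl, rfl⟩ := huniq e f he hf hr
    rcases hb with rfl | rfl
    exacts [Or.inl rfl, Or.inr rfl]
  · intro hv
    have hv₀ : ∃ b, (b = 1 ∨ b = 2) ∧ v = ofRuns b c₀ := by
      rcases hv with rfl | rfl
      exacts [⟨1, Or.inl rfl, rfl⟩, ⟨2, Or.inr rfl, rfl⟩]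
    obtain ⟨b, hb, rfl⟩ := hv₀
    refine ⟨hprim hb, fun v' hv' => ?_⟩
    obtain ⟨b', e, f, -, he, hf, rfl⟩ := (primitive_iff hw hne).1 hv'
    rw [length_ofRuns_pad, length_ofRuns_pad]
    exact hbest e f he hf

def minPad (a : ℕ) : ℕ := if a = 1 then 1 else 0

lemma isTrimPad_minPad (a : ℕ) : IsTrimPad a (minPad a) := by
  unfold IsTrimPad minPad
  split_ifs <;> omega

lemma IsTrimPad.minPad_le {a e : ℕ} (h : IsTrimPad a e) : minPad a ≤ e := by
  unfold minPad
  split_ifs with ha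
  exacts [(h.2 ha).ge, Nat.zero_le e]

lemma isTrimPad_one (a : ℕ) : IsTrimPad a 1 := ⟨le_rfl, fun _ => rfl⟩

/-- a nonempty C∞-word admits exactly two primitives of minimal length,
which are complements of each other, and exactly two primitives of maximal length,
which are complements of each other. -/
theorem two_extremal_primitives (w : List ℕ) (hw : Cinf w) (hne : w ≠ []) :
    (∃ v₁ v₂, v₁ ≠ v₂ ∧ v₂ = compl v₁ ∧
      {v | Primitive v w ∧ ∀ v', Primitive v' w → v.length ≤ v'.length} = {v₁, v₂}) ∧
    (∃ v₁ v₂, v₁ ≠ v₂ ∧ v₂ = compl v₁ ∧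
      {v | Primitive v w ∧ ∀ v', Primitive v' w → v'.length ≤ v.length} = {v₁, v₂}) := by
  have hw₀ : IsWord w := hw 0
  constructor
  · refine exists_extremal_primitives hw₀ hne (· ≤ ·) (isTrimPad_minPad _) (isTrimPad_minPad _)
      (fun e f he hf => ?_) (fun e f he hf hle => ?_)
    all_goals
      have := he.minPad_le
      have := hf.minPad_le
      omega
  · refine exists_extremal_primitives hw₀ hne (fun m n => n ≤ m) (isTrimPad_one _)
      (isTrimPad_one _) (fun e f he hf => ?_) (fun e f he hf hle => ?_)
    all_goals
      have := he.1
      have := hf.1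
      omega

end CInfWords
end

section
/- For every word U ∈ Σ* of length k ≥ 1, there exists exactly one single-rooted minimal word whose left frontier is U, and exactly one double-rooted minimal word whose left frontier is U; moreover, the left frontier of any minimal word contains no occurrence of the symbol 0. Consequently, Ψ restricts to a bijection between the set of single-rooted minimal words of height k and Σ^k, and to a bijection between the set of double-rooted minimal words of height k and Σ^k. -/
namespace CInfWords

open scoped Classical

/-! A shortest primitive of a nonempty word `u` is determined by its first letter: its run lengths
must be `u` itself, extended by a run of length one at each end where `u` begins or ends with `1`.
Hence a minimal word is the iterated shortest primitive of its root, determined by the root and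
the first letters of its derivatives; conversely any such letters over any root of length one or
two can be prescribed. When `D w` begins with `2` the shortest primitive `w` begins with a square,
so `Ψ` of a minimal word never records `0` and is just the sequence of these first letters. -/

lemma IsWord.tail {a : ℕ} {l : List ℕ} (h : IsWord (a :: l)) : IsWord l :=
  fun x hx => h x (List.mem_cons_of_mem _ hx)

lemma IsWord.headI_mem {w : List ℕ} (hw : IsWord w) (hne : w ≠ []) :
    w.headI = 1 ∨ w.headI = 2 := by
  obtain ⟨a, t, rfl⟩ := List.exists_cons_of_ne_nil hne
  exact hw a List.mem_cons_self

lemma getD_zero_eq_headI (l : List ℕ) : l.getD 0 0 = l.headI := by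
  cases l <;> rfl

def build (a : ℕ) : List ℕ → List ℕ
  | [] => []
  | n :: s => List.replicate n a ++ build (3 - a) s

lemma length_build (a : ℕ) (s : List ℕ) : (build a s).length = s.sum := by
  induction s generalizing a with
  | nil => rfl
  | cons n s ih => simp [build, ih]

lemma isWord_build {a : ℕ} (ha : a = 1 ∨ a = 2) (s : List ℕ) : IsWord (build a s) := by
  induction s generalizing a with
  | nil => simp [build, IsWord]
  | cons n s ih =>
    intro x hx
    rcases List.mem_append.mp hx with hx | hx
    · rw [List.eq_of_mem_replicate hx]; exact ha
    · exact ih (by omega) x hx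

lemma build_cons_of_pos (a : ℕ) {n : ℕ} (hn : 0 < n) (s : List ℕ) :
    ∃ t, build a (n :: s) = a :: t :=
  ⟨List.replicate (n - 1) a ++ build (3 - a) s, by
    obtain ⟨m, rfl⟩ := Nat.exists_eq_add_of_lt hn
    simp [build, List.replicate_succ]⟩

lemma rle_replicate_append_s8 (n : ℕ) {a : ℕ} {w : List ℕ} (hw : w.head? ≠ some a) :
    rle (List.replicate (n + 1) a ++ w) = (n + 1) :: rle w := by
  induction n with
  | zero =>
    cases w with
    | nil => rfl
    | cons b t =>
      have hab : a ≠ b := fun h => hw (by simp [h])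
      simp [rle, hab]
  | succ n ih =>
    simp only [List.replicate_succ, List.cons_append] at ih ⊢
    simp only [rle, ih, if_true]

lemma rle_build {s : List ℕ} (hs : ∀ n ∈ s, 0 < n) (a : ℕ) : rle (build a s) = s := by
  induction s generalizing a with
  | nil => rfl
  | cons n s ih =>
    obtain ⟨m, rfl⟩ := Nat.exists_eq_add_of_lt (hs n List.mem_cons_self)
    have hhead : (build (3 - a) s).head? ≠ some a := by
      cases s with
      | nil => simp [build]
      | cons n' s' =>
        obtain ⟨t, ht⟩ := build_cons_of_pos (3 - a) (hs n' (by simp)) s'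
        simp only [ht, List.head?_cons, ne_eq, Option.some.injEq]
        omega
    rw [build, zero_add, rle_replicate_append_s8 m hhead,
      ih (fun x hx => hs x (List.mem_cons_of_mem _ hx))]

lemma build_rle {v : List ℕ} (hv : IsWord v) : build v.headI (rle v) = v := by
  induction v with
  | nil => rfl
  | cons a l ih =>
    cases l with
    | nil => rfl
    | cons b t =>
      have ih := ih hv.tail
      by_cases hab : a = b
      · subst hab
        rcases hr : rle (a :: t) with _ | ⟨c, r⟩
        · simp [hr, build] at ih
        · rw [hr] at ih
          simp only [rle, if_true, hr]
          simpa [build, List.replicate_succ] using ih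
      · have hb : 3 - a = b := by
          rcases hv a (by simp) with rfl | rfl <;> rcases hv b (by simp) with rfl | rfl <;> omega
        simp only [rle, if_neg hab, List.headI_cons]
        simpa [build, hb] using ih

lemma eq_of_rle_eq {v w : List ℕ} (hv : IsWord v) (hw : IsWord w) (hrle : rle v = rle w)
    (hhead : v.headI = w.headI) : v = w := by
  rw [← build_rle hv, ← build_rle hw, hrle, hhead]

lemma sum_rle {v : List ℕ} (hv : IsWord v) : (rle v).sum = v.length := by
  rw [← length_build v.headI, build_rle hv]

/-- The run `[1]` that `D` erases in front of `u`, if `u` begins with `1`. -/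
def pad (u : List ℕ) : List ℕ := if u.headI = 1 then [1] else []

lemma reverse_pad (u : List ℕ) : (pad u).reverse = pad u := by
  unfold pad; split_ifs <;> rfl

lemma pad_append {u : List ℕ} (hu : u ≠ []) (v : List ℕ) : pad (u ++ v) = pad u := by
  obtain ⟨a, t, rfl⟩ := List.exists_cons_of_ne_nil hu
  rfl

lemma trim1_of_headI_ne {t : List ℕ} (h : t.headI ≠ 1) : trim1 t = t := by
  rcases t with _ | ⟨_ | _ | x, l⟩
  · rfl
  · rfl
  · exact absurd rfl h
  · rfl

lemma trim1_pad_append (u : List ℕ) : trim1 (pad u ++ u) = u := by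
  unfold pad
  split_ifs with h
  · rfl
  · exact trim1_of_headI_ne h

lemma exists_eq_of_trim1_eq {t u : List ℕ} (h : trim1 t = u) :
    ∃ m, t = List.replicate m 1 ++ pad u ++ u := by
  by_cases ht : t.headI = 1
  · obtain ⟨l, rfl⟩ : ∃ l, t = 1 :: l := by
      rcases t with _ | ⟨x, l⟩
      · simp at ht
      · exact ⟨l, by simp_all⟩
    change l = u at h
    subst h
    by_cases hu1 : l.headI = 1
    · exact ⟨0, by simp [pad, hu1]⟩
    · exact ⟨1, by simp [pad, hu1]⟩
  · rw [trim1_of_headI_ne ht] at h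
    subst h
    exact ⟨0, by simp [pad, ht]⟩

def minRuns (u : List ℕ) : List ℕ := pad u ++ u ++ pad u.reverse

/-- The shortest primitive of `u` beginning with the letter `a`. -/
def minPrim (a : ℕ) (u : List ℕ) : List ℕ := build a (minRuns u)

lemma D_eq_trim1 (v : List ℕ) : D v = trim1 (trim1 (rle v).reverse).reverse := rfl

lemma trim1_minRuns {u : List ℕ} (hu : u ≠ []) :
    trim1 (trim1 (minRuns u).reverse).reverse = u := by
  have hrev : (minRuns u).reverse = pad (u.reverse ++ pad u) ++ (u.reverse ++ pad u) := by
    simp [minRuns, reverse_pad, pad_append (List.reverse_ne_nil_iff.mpr hu)]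
  rw [hrev, trim1_pad_append]
  simpa [reverse_pad] using trim1_pad_append u

lemma rle_eq_of_D_eq {u v : List ℕ} (hu : u ≠ []) (h : D v = u) :
    ∃ m n, rle v = List.replicate m 1 ++ minRuns u ++ List.replicate n 1 := by
  obtain ⟨m, hm⟩ := exists_eq_of_trim1_eq h
  obtain ⟨n, hn⟩ :=
    exists_eq_of_trim1_eq (by simpa [reverse_pad] using congrArg List.reverse hm)
  refine ⟨m, n, ?_⟩
  rw [← List.reverse_reverse (rle v), hn, pad_append (List.reverse_ne_nil_iff.mpr hu)]
  simp [minRuns, reverse_pad]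

lemma minRuns_ne_nil {u : List ℕ} (hu : u ≠ []) : minRuns u ≠ [] := by
  simp [minRuns, hu]

lemma pos_of_mem_minRuns {u : List ℕ} (hu : IsWord u) : ∀ n ∈ minRuns u, 0 < n := by
  intro n hn
  simp only [minRuns, pad, List.mem_append] at hn
  rcases hn with (hn | hn) | hn
  · split_ifs at hn <;> simp_all
  · rcases hu n hn with rfl | rfl <;> norm_num
  · split_ifs at hn <;> simp_all

lemma isWord_minPrim {a : ℕ} (ha : a = 1 ∨ a = 2) (u : List ℕ) : IsWord (minPrim a u) :=
  isWord_build ha _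

lemma length_minPrim (a : ℕ) (u : List ℕ) : (minPrim a u).length = (minRuns u).sum :=
  length_build _ _

lemma D_minPrim {u : List ℕ} (hu : IsWord u) (hne : u ≠ []) (a : ℕ) :
    D (minPrim a u) = u := by
  rw [D_eq_trim1, minPrim, rle_build (pos_of_mem_minRuns hu), trim1_minRuns hne]

lemma primitive_minPrim {a : ℕ} (ha : a = 1 ∨ a = 2) {u : List ℕ} (hu : IsWord u)
    (hne : u ≠ []) : Primitive (minPrim a u) u :=
  ⟨isWord_minPrim ha u, D_minPrim hu hne a⟩

lemma headI_minPrim {u : List ℕ} (hu : IsWord u) (hne : u ≠ []) (a : ℕ) :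
    (minPrim a u).headI = a := by
  obtain ⟨n, s, hns⟩ := List.exists_cons_of_ne_nil (minRuns_ne_nil hne)
  obtain ⟨t, ht⟩ := build_cons_of_pos a (pos_of_mem_minRuns hu n (by simp [hns])) s
  rw [minPrim, hns, ht, List.headI_cons]

lemma minPrim_eq_cons_cons {u : List ℕ} (hu : u.headI = 2) (a : ℕ) :
    ∃ t, minPrim a u = a :: a :: t := by
  obtain ⟨l, rfl⟩ : ∃ l, u = 2 :: l := by
    rcases u with _ | ⟨x, l⟩
    · simp at hu
    · exact ⟨l, by simp_all⟩
  exact ⟨build (3 - a) (l ++ pad (2 :: l).reverse), by simp [minPrim, minRuns, pad, build,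
    List.replicate_succ]⟩

lemma length_eq_of_primitive {u v : List ℕ} (hu : u ≠ []) (hv : Primitive v u) (a : ℕ) :
    ∃ m n, rle v = List.replicate m 1 ++ minRuns u ++ List.replicate n 1 ∧
      v.length = m + (minPrim a u).length + n := by
  obtain ⟨m, n, h⟩ := rle_eq_of_D_eq hu hv.2
  refine ⟨m, n, h, ?_⟩
  rw [← sum_rle hv.1, h, length_minPrim]
  simp [add_assoc]

lemma length_minPrim_le {u v : List ℕ} (hu : u ≠ []) (hv : Primitive v u) (a : ℕ) :
    (minPrim a u).length ≤ v.length := by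
  obtain ⟨m, n, -, hlen⟩ := length_eq_of_primitive hu hv a
  omega

lemma eq_minPrim_of_length_le {u v : List ℕ} (hu : u ≠ []) (hv : Primitive v u) {a : ℕ}
    (hlen : v.length ≤ (minPrim a u).length) : v = minPrim v.headI u := by
  obtain ⟨m, n, hrle, hlen'⟩ := length_eq_of_primitive hu hv a
  obtain ⟨rfl, rfl⟩ : m = 0 ∧ n = 0 := by omega
  conv_lhs => rw [← build_rle hv.1]
  simp [hrle, minPrim]

lemma rle_eq_replicate_of_D_eq_nil {v : List ℕ} (hv : IsWord v) (h : D v = []) :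
    rle v = List.replicate v.length 1 := by
  obtain ⟨m, hm⟩ := exists_eq_of_trim1_eq h
  obtain ⟨n, hn⟩ := exists_eq_of_trim1_eq (u := List.replicate m 1)
    (by simpa [pad] using congrArg List.reverse hm)
  have hones : ∀ x ∈ rle v, x = 1 := by
    intro x hx
    rw [← List.mem_reverse, hn] at hx
    unfold pad at hx
    split_ifs at hx <;> simp at hx <;> omega
  rw [← sum_rle hv, List.eq_replicate_iff.2 ⟨rfl, hones⟩]
  simp

lemma iterate_D_nil (n : ℕ) : D^[n] [] = [] :=
  Function.iterate_fixed rfl n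

lemma height_eq {w : List ℕ} {n : ℕ} (h : D^[n] w = []) (hlt : ∀ m < n, D^[m] w ≠ []) :
    height w = n :=
  le_antisymm (Nat.sInf_le h) <| not_lt.1 fun hlt' =>
    hlt _ hlt' (Nat.sInf_mem (s := {k | D^[k] w = []}) ⟨n, h⟩)

lemma height_D (w : List ℕ) : height (D w) = height w - 1 := by
  rcases Nat.eq_zero_or_pos (height w) with h0 | hpos
  · rw [h0]
    rcases Nat.sInf_eq_zero.1 h0 with hw | hempty
    · have hw : w = [] := hw
      subst hw
      exact Nat.sInf_eq_zero.2 (Or.inl rfl)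
    · refine Nat.sInf_eq_zero.2 (Or.inr (Set.eq_empty_of_forall_notMem fun k hk => ?_))
      have hk : D^[k + 1] w = [] := hk
      exact hempty.subset hk
  · have := Nat.sInf_add (p := fun m => D^[m] w = []) (n := 1) hpos
    simp only [Function.iterate_succ_apply] at this
    unfold height
    omega

lemma iterate_height {w : List ℕ} (h : 0 < height w) : D^[height w] w = [] :=
  Nat.sInf_mem (Nat.nonempty_of_pos_sInf h)

lemma iterate_ne_nil {w : List ℕ} {i : ℕ} (h : i < height w) : D^[i] w ≠ [] :=
  Nat.notMem_of_lt_sInf h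

lemma root_D {w : List ℕ} (h : 2 ≤ height w) : root (D w) = root w := by
  unfold root
  rw [height_D, ← Function.iterate_succ_apply]
  congr 1
  omega

lemma root_eq_self {w : List ℕ} (h : height w = 1) : root w = w := by
  simp [root, h]

lemma psi_length (w : List ℕ) : (psi w).length = height w := by
  simp [psi]

lemma cinf_iff {v : List ℕ} : Cinf v ↔ IsWord v ∧ Cinf (D v) := by
  simp only [Cinf, ← Nat.and_forall_add_one (p := fun k => IsWord (D^[k] v)),
    Function.iterate_zero_apply, Function.iterate_succ_apply]

theorem minimal_iff_of_height_D_pos {v : List ℕ} (h : 0 < height (D v)) :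
    Minimal v ↔
      IsWord v ∧ Minimal (D v) ∧ ∀ u, Primitive u (D v) → v.length ≤ u.length := by
  have hv : height v = height (D v) + 1 := by
    have := height_D v
    omega
  unfold Minimal
  rw [cinf_iff, hv, ← Nat.and_forall_add_one]
  have hshift (n : ℕ) : n + 1 + 2 ≤ height (D v) + 1 ↔ n + 2 ≤ height (D v) := by omega
  simp only [Function.iterate_zero_apply, Function.iterate_succ_apply, hshift, h,
    show 0 + 2 ≤ height (D v) + 1 by omega, Nat.succ_pos, true_implies, true_and]
  tauto

lemma minimal_of_D_eq_nil {w : List ℕ} (hw : IsWord w) (hne : w ≠ []) (hD : D w = []) :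
    Minimal w ∧ height w = 1 := by
  have h1 : height w = 1 := height_eq hD fun m hm => by
    obtain rfl : m = 0 := by omega
    exact hne
  refine ⟨⟨cinf_iff.2 ⟨hw, fun k => ?_⟩, by omega, fun j hj => by omega⟩, h1⟩
  rw [hD, iterate_D_nil]
  simp [IsWord]

namespace Minimal

variable {w : List ℕ}

lemma isWord_iterate (hw : Minimal w) (i : ℕ) : IsWord (D^[i] w) := hw.1 i

lemma isWord (hw : Minimal w) : IsWord w := hw.1 0

lemma height_pos (hw : Minimal w) : 0 < height w := hw.2.1

lemma ne_nil (hw : Minimal w) : w ≠ [] := iterate_ne_nil hw.height_pos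

lemma minimal_D (hw : Minimal w) (h : 2 ≤ height w) : Minimal (D w) :=
  ((minimal_iff_of_height_D_pos (by rw [height_D]; omega)).1 hw).2.1

lemma minimal_minPrim (hw : Minimal w) {a : ℕ} (ha : a = 1 ∨ a = 2) :
    Minimal (minPrim a w) := by
  have hD := D_minPrim hw.isWord hw.ne_nil a
  refine (minimal_iff_of_height_D_pos (by rw [hD]; exact hw.height_pos)).2
    ⟨isWord_minPrim ha w, by rw [hD]; exact hw,
      fun u hu => length_minPrim_le hw.ne_nil (hD ▸ hu) a⟩

lemma iterate_eq_minPrim (hw : Minimal w) {j : ℕ} (hj : j + 2 ≤ height w) :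
    D^[j] w = minPrim (D^[j] w).headI (D^[j + 1] w) := by
  have hne : D^[j + 1] w ≠ [] := iterate_ne_nil (by omega)
  have hprim : Primitive (D^[j] w) (D^[j + 1] w) :=
    ⟨hw.isWord_iterate j, (Function.iterate_succ_apply' _ j w).symm⟩
  exact eq_minPrim_of_length_le hne hprim
    (hw.2.2 j hj _ (primitive_minPrim (Or.inl rfl) (hw.isWord_iterate _) hne))

lemma eq_minPrim (hw : Minimal w) (h : 2 ≤ height w) :
    w = minPrim w.headI (D w) :=
  hw.iterate_eq_minPrim (j := 0) h

/-- `Ψ` never records `0`: a derivative beginning with `2` forces a square at the start of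
its shortest primitive. -/
theorem psi_eq (hw : Minimal w) :
    psi w = (List.range (height w)).map fun i => (D^[i] w).headI := by
  refine List.map_congr_left fun i hi => ?_
  rcases i with _ | j
  · simp only [↓reduceIte, getD_zero_eq_headI, Function.iterate_zero_apply]
  · have hcond : ¬((D^[j + 1] w).headI = 2 ∧ (D^[j] w).headI ≠ (D^[j] w).getD 1 0) := by
      rintro ⟨h2, hne⟩
      obtain ⟨t, ht⟩ := minPrim_eq_cons_cons h2 (D^[j] w).headI
      rw [hw.iterate_eq_minPrim (by simp at hi; omega), ht] at hne
      exact hne rfl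
    simp only [Nat.add_one_ne_zero, if_false, Nat.add_sub_cancel, getD_zero_eq_headI,
      if_neg hcond]

lemma psi_eq_cons (hw : Minimal w) (h : 2 ≤ height w) :
    psi w = w.headI :: psi (D w) := by
  obtain ⟨n, hn⟩ : ∃ n, height w = n + 1 := ⟨height w - 1, by omega⟩
  rw [hw.psi_eq, (hw.minimal_D h).psi_eq, height_D, hn, List.range_succ_eq_map]
  simp [Function.iterate_succ_apply]

lemma isWord_psi (hw : Minimal w) : IsWord (psi w) := by
  rw [hw.psi_eq]
  intro x hx
  obtain ⟨i, hi, rfl⟩ := List.mem_map.1 hx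
  exact (hw.isWord_iterate i).headI_mem (iterate_ne_nil (List.mem_range.1 hi))

lemma zero_notMem_psi (hw : Minimal w) : 0 ∉ psi w := fun h => by
  rcases hw.isWord_psi 0 h with h | h <;> simp at h

theorem eq_of_psi_eq {w₁ w₂ : List ℕ} (h₁ : Minimal w₁) (h₂ : Minimal w₂)
    (hpsi : psi w₁ = psi w₂) (hroot : (root w₁).length = (root w₂).length) :
    w₁ = w₂ := by
  induction hn : height w₁ generalizing w₁ w₂ with
  | zero => exact absurd hn h₁.height_pos.ne'
  | succ n ih =>
    have hn₂ : height w₂ = n + 1 := by rw [← psi_length, ← hpsi, psi_length, hn]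
    rcases Nat.eq_zero_or_pos n with rfl | hn0
    · have hD₁ : D w₁ = [] := by simpa [hn] using iterate_height h₁.height_pos
      have hD₂ : D w₂ = [] := by simpa [hn₂] using iterate_height h₂.height_pos
      rw [root_eq_self hn, root_eq_self hn₂] at hroot
      rw [h₁.psi_eq, h₂.psi_eq, hn, hn₂] at hpsi
      refine eq_of_rle_eq h₁.isWord h₂.isWord ?_ (by simpa using hpsi)
      rw [rle_eq_replicate_of_D_eq_nil h₁.isWord hD₁,
        rle_eq_replicate_of_D_eq_nil h₂.isWord hD₂, hroot]
    · rw [h₁.psi_eq_cons (by omega), h₂.psi_eq_cons (by omega), List.cons_eq_cons] at hpsi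
      have hD : D w₁ = D w₂ :=
        ih (h₁.minimal_D (by omega)) (h₂.minimal_D (by omega)) hpsi.2
          (by rwa [root_D (by omega), root_D (by omega)]) (by rw [height_D, hn]; rfl)
      rw [h₁.eq_minPrim (by omega), h₂.eq_minPrim (by omega), hpsi.1, hD]

end Minimal

lemma exists_D_eq_nil {a L : ℕ} (ha : a = 1 ∨ a = 2) (hL : L = 1 ∨ L = 2) :
    ∃ r, IsWord r ∧ D r = [] ∧ r.length = L ∧ r.headI = a := by
  rcases ha with rfl | rfl <;> rcases hL with rfl | rfl
  exacts [⟨[1], by simp [IsWord], rfl, rfl, rfl⟩, ⟨[1, 2], by simp [IsWord], rfl, rfl, rfl⟩,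
    ⟨[2], by simp [IsWord], rfl, rfl, rfl⟩, ⟨[2, 1], by simp [IsWord], rfl, rfl, rfl⟩]

theorem exists_minimal_psi_eq {L : ℕ} (hL : L = 1 ∨ L = 2) {U : List ℕ} (hU : IsWord U)
    (hne : U ≠ []) : ∃ w, (Minimal w ∧ (root w).length = L) ∧ psi w = U := by
  induction U with
  | nil => exact absurd rfl hne
  | cons a V ih =>
    have ha := hU a List.mem_cons_self
    obtain rfl | hV := eq_or_ne V []
    · obtain ⟨r, hr, hD, hlen, hhead⟩ := exists_D_eq_nil ha hL
      obtain ⟨hmin, h1⟩ := minimal_of_D_eq_nil hr (List.ne_nil_of_length_pos (by omega)) hD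
      refine ⟨r, ⟨hmin, by rw [root_eq_self h1, hlen]⟩, ?_⟩
      rw [hmin.psi_eq, h1]
      simp [hhead]
    · obtain ⟨w, ⟨hw, hroot⟩, hpsi⟩ := ih hU.tail hV
      have hD := D_minPrim hw.isWord hw.ne_nil a
      have h2 : 2 ≤ height (minPrim a w) := by
        have := height_D (minPrim a w)
        rw [hD] at this
        have := hw.height_pos
        omega
      refine ⟨minPrim a w, ⟨hw.minimal_minPrim ha, by rw [← root_D h2, hD, hroot]⟩, ?_⟩
      rw [(hw.minimal_minPrim ha).psi_eq_cons h2, hD, headI_minPrim hw.isWord hw.ne_nil, hpsi]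

theorem existsUnique_psi_eq {L : ℕ} (hL : L = 1 ∨ L = 2) {U : List ℕ} (hU : IsWord U)
    (hne : U ≠ []) : ∃! w, (Minimal w ∧ (root w).length = L) ∧ psi w = U := by
  obtain ⟨w, hw, hpsi⟩ := exists_minimal_psi_eq hL hU hne
  exact ⟨w, ⟨hw, hpsi⟩, fun w' ⟨hw', hpsi'⟩ =>
    hw'.1.eq_of_psi_eq hw.1 (hpsi'.trans hpsi.symm) (hw'.2.trans hw.2.symm)⟩

theorem bijOn_psi {L k : ℕ} (hL : L = 1 ∨ L = 2) (hk : 1 ≤ k) :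
    Set.BijOn psi {w | (Minimal w ∧ (root w).length = L) ∧ height w = k}
      {U | IsWord U ∧ U.length = k} := by
  refine ⟨fun w ⟨hw, hk⟩ => ⟨hw.1.isWord_psi, by rw [psi_length, hk]⟩,
    fun _ h₁ _ h₂ hpsi => h₁.1.1.eq_of_psi_eq h₂.1.1 hpsi (h₁.1.2.trans h₂.1.2.symm),
    fun U ⟨hU, hlen⟩ => ?_⟩
  obtain ⟨w, hw, hpsi⟩ := exists_minimal_psi_eq hL hU (List.ne_nil_of_length_pos (by omega))
  exact ⟨w, ⟨hw, by rw [← psi_length, hpsi, hlen]⟩, hpsi⟩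

/-- for every U ∈ Σ^k with k ≥ 1 there is a unique single-rooted and a
unique double-rooted minimal word with left frontier U; left frontiers of minimal
words contain no 0; and Ψ gives bijections between single-rooted (resp.
double-rooted) minimal words of height k and Σ^k. -/
theorem minimal_words_bijection (k : ℕ) (hk : 1 ≤ k) :
    (∀ U : List ℕ, IsWord U → U.length = k →
      (∃! w, SRMin w ∧ psi w = U) ∧ (∃! w, DRMin w ∧ psi w = U)) ∧
    (∀ w, Minimal w → 0 ∉ psi w) ∧
    Set.BijOn psi {w | SRMin w ∧ height w = k} {U | IsWord U ∧ U.length = k} ∧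
    Set.BijOn psi {w | DRMin w ∧ height w = k} {U | IsWord U ∧ U.length = k} := by
  refine ⟨fun U hU hlen => ?_, fun w hw => hw.zero_notMem_psi, bijOn_psi (Or.inl rfl) hk,
    bijOn_psi (Or.inr rfl) hk⟩
  have hne : U ≠ [] := List.ne_nil_of_length_pos (by omega)
  exact ⟨existsUnique_psi_eq (Or.inl rfl) hU hne, existsUnique_psi_eq (Or.inr rfl) hU hne⟩

end CInfWords
end
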